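/- arXiv:2401.03073 — 4 statements merged into one kernel-verified Lean document; each statement's English description precedes it below -/
import Mathlib

section
/- For every p ∈ W one has ‖Π(p)‖_{T⁻¹} = ‖p‖_{T⁻¹}, i.e. the exchange operator Π is unitary with respect to the T⁻¹-inner product. -/
noncomputable section
open scoped InnerProductSpace
open LinearMap

variable {V W : Type*}
  [NormedAddCommGroup V] [InnerProductSpace ℂ V] [FiniteDimensional ℂ V]
  [NormedAddCommGroup W] [InnerProductSpace ℂ W] [FiniteDimensional ℂ W]

/-- The norm `‖p‖_{T⁻¹} := ⟨T⁻¹p, p⟩^{1/2}` induced on `W` by the inverse of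
the self-adjoint positive definite operator `T`. -/
def tinvNorm (T : W →ₗ[ℂ] W) [Invertible T] (p : W) : ℝ :=
  Real.sqrt (⟪(⅟T) p, p⟫_ℂ).re

/-- The operator `R*TR : V → V`. -/
def rtrOp (T : W →ₗ[ℂ] W) (R : V →ₗ[ℂ] W) : V →ₗ[ℂ] V :=
  adjoint R ∘ₗ T ∘ₗ R

/-- The exchange operator `Π := 2TR(R*TR)⁻¹R* − Id : W → W`. -/
def exchangeOp (T : W →ₗ[ℂ] W) (R : V →ₗ[ℂ] W) [Invertible (rtrOp T R)] : W →ₗ[ℂ] W :=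
  (2 : ℂ) • (T ∘ₗ R ∘ₗ ⅟(rtrOp T R) ∘ₗ adjoint R) - LinearMap.id

/-! Write `Π = 2P - 1` with `P := TR(R*TR)⁻¹R*`. Then `P² = P`, and `P* T⁻¹ = T⁻¹ P`, i.e. `P` is
self-adjoint for the `T⁻¹`-inner product. The reflection `2P - 1` across such a projection is an
involution that is again `T⁻¹`-self-adjoint, so `Π* T⁻¹ Π = T⁻¹ Π² = T⁻¹`. -/

section Reflection

variable {A : Type*} [Ring A]

theorem IsIdempotentElem.two_mul_sub_one_mul_self {p : A} (hp : IsIdempotentElem p) :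
    (2 * p - 1) * (2 * p - 1) = 1 := by
  have hpp : p * p = p := hp
  noncomm_ring
  rw [hpp]
  abel

theorem star_two_mul_sub_one_mul_mul_of_isIdempotentElem [StarRing A] {p s : A} (hp : IsIdempotentElem p)
    (hps : star p * s = s * p) : star (2 * p - 1) * s * (2 * p - 1) = s := by
  have hrefl : star (2 * p - 1) * s = s * (2 * p - 1) := by
    rw [star_sub, star_mul, star_ofNat, star_one, ← (Commute.ofNat_left 2 (star p)).eq,
      sub_mul, mul_sub, mul_assoc, hps, ← mul_assoc, (Commute.ofNat_left 2 s).eq, mul_assoc,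
      one_mul, mul_one]
  rw [hrefl, mul_assoc, hp.two_mul_sub_one_mul_self, mul_one]

end Reflection

theorem LinearMap.isIdempotentElem_comp_comp {R M N : Type*} [Semiring R] [AddCommMonoid M]
    [AddCommMonoid N] [Module R M] [Module R N] (A : N →ₗ[R] M) (B : M →ₗ[R] N)
    (C : N →ₗ[R] N) (h : C ∘ₗ B ∘ₗ A = LinearMap.id) : IsIdempotentElem (A ∘ₗ C ∘ₗ B) := by
  calc (A ∘ₗ C ∘ₗ B) ∘ₗ (A ∘ₗ C ∘ₗ B) = A ∘ₗ (C ∘ₗ B ∘ₗ A) ∘ₗ C ∘ₗ B := by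
        simp only [LinearMap.comp_assoc]
    _ = A ∘ₗ C ∘ₗ B := by rw [h, LinearMap.id_comp]

theorem LinearMap.inner_map_map_of_star_mul_mul {𝕜 E : Type*} [RCLike 𝕜] [NormedAddCommGroup E]
    [InnerProductSpace 𝕜 E] [FiniteDimensional 𝕜 E] {S U : E →ₗ[𝕜] E}
    (h : star U * S * U = S) (x : E) : ⟪S (U x), U x⟫_𝕜 = ⟪S x, x⟫_𝕜 := by
  rw [← adjoint_inner_left, ← star_eq_adjoint, ← Module.End.mul_apply, ← Module.End.mul_apply,
    h]

section ExchangeOp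

variable (T : W →ₗ[ℂ] W) (R : V →ₗ[ℂ] W) [Invertible (rtrOp T R)]

def exchangeProj : W →ₗ[ℂ] W :=
  T ∘ₗ R ∘ₗ ⅟(rtrOp T R) ∘ₗ adjoint R

theorem exchangeOp_eq : exchangeOp T R = 2 * exchangeProj T R - 1 := by
  rw [exchangeOp, exchangeProj, two_smul, two_mul, Module.End.one_eq_id]

theorem isIdempotentElem_exchangeProj : IsIdempotentElem (exchangeProj T R) :=
  (T ∘ₗ R).isIdempotentElem_comp_comp (adjoint R) _ (invOf_mul_self (rtrOp T R))

theorem star_exchangeProj_mul_invOf [Invertible T] (hT : IsSelfAdjoint T) :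
    star (exchangeProj T R) * ⅟T = ⅟T * exchangeProj T R := by
  have hrtr : IsSelfAdjoint (rtrOp T R) :=
    (isSymmetric_iff_isSelfAdjoint _).mp
      (((isSymmetric_iff_isSelfAdjoint T).mpr hT).adjoint_conj R)
  have hQ : IsSelfAdjoint (R ∘ₗ ⅟(rtrOp T R) ∘ₗ adjoint R) :=
    (isSymmetric_iff_isSelfAdjoint _).mp
      (((isSymmetric_iff_isSelfAdjoint _).mpr hrtr.invOf).conj_adjoint R)
  have hP : exchangeProj T R = T * (R ∘ₗ ⅟(rtrOp T R) ∘ₗ adjoint R) := rfl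
  rw [hP, star_mul, hQ.star_eq, hT.star_eq, mul_assoc, mul_invOf_self, mul_one, ← mul_assoc,
    invOf_mul_self, one_mul]

end ExchangeOp

theorem exchangeOp_unitary_general
    (T : W →ₗ[ℂ] W) [Invertible T]
    (hTsa : adjoint T = T)
    (R : V →ₗ[ℂ] W)
    [Invertible (rtrOp T R)] :
    ∀ p : W, tinvNorm T (exchangeOp T R p) = tinvNorm T p := by
  intro p
  have hP := isIdempotentElem_exchangeProj T R
  have hPT := star_exchangeProj_mul_invOf T R (isSelfAdjoint_iff'.mpr hTsa)
  rw [tinvNorm, tinvNorm, exchangeOp_eq,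
    inner_map_map_of_star_mul_mul (star_two_mul_sub_one_mul_mul_of_isIdempotentElem hP hPT)]

/-- the exchange operator `Π` is unitary with respect to the
`T⁻¹`-inner product: `‖Π(p)‖_{T⁻¹} = ‖p‖_{T⁻¹}` for every `p ∈ W`. -/
theorem exchangeOp_unitary
    (T : W →ₗ[ℂ] W) [Invertible T]
    (hTsa : adjoint T = T)
    (hTpos : ∀ w : W, w ≠ 0 → 0 < (⟪T w, w⟫_ℂ).re)
    (R : V →ₗ[ℂ] W) (hR : Function.Injective R)
    [Invertible (rtrOp T R)] :
    ∀ p : W, tinvNorm T (exchangeOp T R p) = tinvNorm T p :=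
  exchangeOp_unitary_general T hTsa R
end
end

section
/- For every α ∈ (0,1) and every q ∈ H one has ‖((1−α)Id − αU)q‖² ≤ (1 − α(1−α)γ²)‖q‖²; in particular the operator (1−α)Id − αU is a strict contraction whenever γ > 0. -/
/-! The relaxation `(1 - α) x - α y` is a convex combination of `x` and `-y`, so its squared norm
is the average of `‖x‖²` and `‖y‖²` minus `α (1 - α) ‖x + y‖²`. Contractivity bounds the average
by `‖x‖²`, and the definition of `γ` bounds `‖x + Ux‖` from below by `γ ‖x‖`. -/

noncomputable section
open scoped InnerProductSpace
open LinearMap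

/-- `γ := inf_{q ≠ 0} ‖(Id+U)q‖ / ‖q‖`. -/
def gammaInf {H : Type*} [NormedAddCommGroup H] [InnerProductSpace ℂ H]
    (U : H →ₗ[ℂ] H) : ℝ :=
  ⨅ q : {q : H // q ≠ 0}, ‖(q : H) + U (q : H)‖ / ‖(q : H)‖

section RealInnerProductSpace

variable {E : Type*} [NormedAddCommGroup E] [InnerProductSpace ℝ E]

theorem norm_one_sub_smul_sub_smul_sq (α : ℝ) (x y : E) :
    ‖(1 - α) • x - α • y‖ ^ 2 =
      (1 - α) * ‖x‖ ^ 2 + α * ‖y‖ ^ 2 - α * (1 - α) * ‖x + y‖ ^ 2 := by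
  rw [norm_sub_sq_real, norm_add_sq_real, norm_smul, norm_smul, real_inner_smul_left,
    real_inner_smul_right, mul_pow, mul_pow, Real.norm_eq_abs, Real.norm_eq_abs, sq_abs, sq_abs]
  ring

theorem norm_one_sub_smul_sub_smul_sq_le {α γ : ℝ} {x y : E} (hα₀ : 0 ≤ α) (hα₁ : α ≤ 1)
    (hγ : 0 ≤ γ) (hy : ‖y‖ ≤ ‖x‖) (hxy : γ * ‖x‖ ≤ ‖x + y‖) :
    ‖(1 - α) • x - α • y‖ ^ 2 ≤ (1 - α * (1 - α) * γ ^ 2) * ‖x‖ ^ 2 := by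
  have hy_sq : ‖y‖ ^ 2 ≤ ‖x‖ ^ 2 := pow_le_pow_left₀ (norm_nonneg y) hy 2
  have hxy_sq : (γ * ‖x‖) ^ 2 ≤ ‖x + y‖ ^ 2 := pow_le_pow_left₀ (by positivity) hxy 2
  have hαα : 0 ≤ α * (1 - α) := mul_nonneg hα₀ (sub_nonneg.mpr hα₁)
  rw [norm_one_sub_smul_sub_smul_sq]
  nlinarith [mul_le_mul_of_nonneg_left hxy_sq hαα, mul_le_mul_of_nonneg_left hy_sq hα₀]

end RealInnerProductSpace

section GammaInf

variable {H : Type*} [NormedAddCommGroup H] [InnerProductSpace ℂ H]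

theorem gammaInf_nonneg (U : H →ₗ[ℂ] H) : 0 ≤ gammaInf U :=
  Real.iInf_nonneg fun _ ↦ div_nonneg (norm_nonneg _) (norm_nonneg _)

theorem gammaInf_mul_norm_le (U : H →ₗ[ℂ] H) (q : H) : gammaInf U * ‖q‖ ≤ ‖q + U q‖ := by
  rcases eq_or_ne q 0 with rfl | hq
  · simp
  have hbdd : BddBelow (Set.range fun p : {p : H // p ≠ 0} ↦ ‖(p : H) + U p‖ / ‖(p : H)‖) :=
    ⟨0, Set.forall_mem_range.mpr fun _ ↦ div_nonneg (norm_nonneg _) (norm_nonneg _)⟩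
  rw [← le_div_iff₀ (norm_pos_iff.mpr hq)]
  exact ciInf_le hbdd ⟨q, hq⟩

end GammaInf

theorem relaxed_operator_contraction_general
    {H : Type*} [NormedAddCommGroup H] [InnerProductSpace ℂ H]
    (U : H →ₗ[ℂ] H) (hU : ∀ q : H, ‖U q‖ ≤ ‖q‖) :
    ∀ α ∈ Set.Ioo (0 : ℝ) 1, ∀ q : H,
      (‖(1 - α) • q - α • U q‖ ^ 2 ≤ (1 - α * (1 - α) * (gammaInf U) ^ 2) * ‖q‖ ^ 2) ∧
      (0 < gammaInf U → q ≠ 0 → ‖(1 - α) • q - α • U q‖ < ‖q‖) := by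
  let _ : InnerProductSpace ℝ H := InnerProductSpace.complexToReal
  rintro α ⟨hα₀, hα₁⟩ q
  have hbound := norm_one_sub_smul_sub_smul_sq_le hα₀.le hα₁.le (gammaInf_nonneg U) (hU q)
    (gammaInf_mul_norm_le U q)
  refine ⟨hbound, fun hγ hq ↦ ?_⟩
  have hgap : 0 < α * (1 - α) * gammaInf U ^ 2 * ‖q‖ ^ 2 := by
    have := norm_pos_iff.mpr hq
    have := sub_pos.mpr hα₁
    positivity
  exact lt_of_pow_lt_pow_left₀ 2 (norm_nonneg q) (by linarith)

/-- if `U` is a contraction then for every `α ∈ (0,1)` and every `q`,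
`‖((1−α)Id − αU)q‖² ≤ (1 − α(1−α)γ²)‖q‖²`; in particular `(1−α)Id − αU` is a
strict contraction whenever `γ > 0`. -/
theorem relaxed_operator_contraction
    {H : Type*} [NormedAddCommGroup H] [InnerProductSpace ℂ H] [FiniteDimensional ℂ H]
    (U : H →ₗ[ℂ] H) (hU : ∀ q : H, ‖U q‖ ≤ ‖q‖) :
    ∀ α ∈ Set.Ioo (0 : ℝ) 1, ∀ q : H,
      (‖(1 - α) • q - α • U q‖ ^ 2 ≤ (1 - α * (1 - α) * (gammaInf U) ^ 2) * ‖q‖ ^ 2) ∧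
      (0 < gammaInf U → q ≠ 0 → ‖(1 - α) • q - α • U q‖ < ‖q‖) :=
  relaxed_operator_contraction_general U hU
end
end

section
/- Suppose that for a given n ≥ 0 the approximate solve satisfies ‖p̃∞^{(n+1)} − p̃^{(n+1)}‖_{R*TR} ≤ ε‖p̃∞^{(n+1)} − p̃^{(n)}‖_{R*TR}. Then ‖p̃∞^{(n+1)} − p̃^{(n+1)}‖_{R*TR} ≤ ε‖p̃∞^{(n)} − p̃^{(n)}‖_{R*TR} + ε‖q̃^{(n)} − q̃^{(n−1)}‖_{T⁻¹}. -/
noncomputable section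
open scoped InnerProductSpace
open LinearMap

variable {V W : Type*}
  [NormedAddCommGroup V] [InnerProductSpace ℂ V] [FiniteDimensional ℂ V]
  [NormedAddCommGroup W] [InnerProductSpace ℂ W] [FiniteDimensional ℂ W]

/-- The norm `‖x‖_{R*TR} := ⟨(R*TR)x, x⟩^{1/2}` on `V`. -/
def rtrNorm (T : W →ₗ[ℂ] W) (R : V →ₗ[ℂ] W) (x : V) : ℝ :=
  Real.sqrt (⟪(rtrOp T R) x, x⟫_ℂ).re

/-!
With `‖x‖_A := √(re ⟪A x, x⟫)` for a positive operator `A`, one has `‖x‖_{R*TR} = ‖R x‖_T` and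
`‖w‖_{T⁻¹} = ‖T⁻¹ w‖_T`. For `x = (R*TR)⁻¹R* w`, the vector `R x` is the `T`-orthogonal
projection of `T⁻¹ w` onto the range of `R`, so `‖x‖_{R*TR} ≤ ‖w‖_{T⁻¹}` by Cauchy–Schwarz for
the semi-inner product `⟪T ·, ·⟫`. Since `p̃∞` depends linearly on `q̃`,
`p̃∞^{(n+1)} − p̃^{(n)} = (p̃∞^{(n)} − p̃^{(n)}) + (R*TR)⁻¹R*S(q̃^{(n)} − q̃^{(n−1)})`; the triangle
inequality and `‖S‖_{T⁻¹} ≤ 1` then bound the right-hand side of the hypothesis.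
-/

namespace LinearMap

variable {𝕜 E F : Type*} [RCLike 𝕜]
  [NormedAddCommGroup E] [InnerProductSpace 𝕜 E] [NormedAddCommGroup F] [InnerProductSpace 𝕜 F]

open RCLike

def energyNorm (A : E →ₗ[𝕜] E) (x : E) : ℝ :=
  √(re ⟪A x, x⟫_𝕜)

lemma energyNorm_nonneg (A : E →ₗ[𝕜] E) (x : E) : 0 ≤ energyNorm A x :=
  Real.sqrt_nonneg _

lemma energyNorm_invOf (A : E →ₗ[𝕜] E) [Invertible A] (x : E) :
    energyNorm (⅟A) x = energyNorm A ((⅟A) x) := by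
  rw [energyNorm, energyNorm, ← Module.End.mul_apply, mul_invOf_self, Module.End.one_apply,
    inner_re_symm]

lemma energyNorm_adjoint_comp_comp [FiniteDimensional 𝕜 E] [FiniteDimensional 𝕜 F]
    (A : F →ₗ[𝕜] F) (R : E →ₗ[𝕜] F) (x : E) :
    energyNorm (adjoint R ∘ₗ A ∘ₗ R) x = energyNorm A (R x) := by
  rw [energyNorm, energyNorm, comp_apply, comp_apply, adjoint_inner_left]

namespace IsPositive

section
variable {A : E →ₗ[𝕜] E} (hA : A.IsPositive)
include hA

abbrev preInnerProductSpaceCore : PreInnerProductSpace.Core 𝕜 E where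
  inner x y := ⟪A x, y⟫_𝕜
  conj_inner_symm x y := by rw [inner_conj_symm, hA.isSymmetric]
  re_inner_nonneg := hA.re_inner_nonneg_left
  add_left x y z := by rw [map_add, inner_add_left]
  smul_left x y r := by rw [map_smul, inner_smul_left]

lemma sq_energyNorm (x : E) : energyNorm A x ^ 2 = re ⟪A x, x⟫_𝕜 :=
  Real.sq_sqrt (hA.re_inner_nonneg_left x)

lemma re_inner_le_energyNorm_mul (x y : E) :
    re ⟪A x, y⟫_𝕜 ≤ energyNorm A x * energyNorm A y :=
  (re_le_norm _).trans
    (InnerProductSpace.Core.norm_inner_le_norm (c := hA.preInnerProductSpaceCore) x y)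

lemma energyNorm_add_le (x y : E) :
    energyNorm A (x + y) ≤ energyNorm A x + energyNorm A y :=
  @norm_add_le E (InnerProductSpace.Core.toSeminormedAddCommGroup
    (c := hA.preInnerProductSpaceCore)).toSeminormedAddGroup x y

end

/-- `h` says that `R x` is the `A`-orthogonal projection of `y` onto the range of `R`. -/
lemma energyNorm_le_of_adjoint_apply_eq [FiniteDimensional 𝕜 E] [FiniteDimensional 𝕜 F]
    {A : F →ₗ[𝕜] F} (hA : A.IsPositive) (R : E →ₗ[𝕜] F) {x : E} {y : F}
    (h : adjoint R (A (R x)) = adjoint R (A y)) :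
    energyNorm A (R x) ≤ energyNorm A y := by
  have hsq : energyNorm A (R x) ^ 2 ≤ energyNorm A y * energyNorm A (R x) :=
    calc energyNorm A (R x) ^ 2 = re ⟪adjoint R (A (R x)), x⟫_𝕜 := by
          rw [hA.sq_energyNorm, adjoint_inner_left]
      _ = re ⟪A y, R x⟫_𝕜 := by rw [h, adjoint_inner_left]
      _ ≤ energyNorm A y * energyNorm A (R x) := hA.re_inner_le_energyNorm_mul y (R x)
  nlinarith [energyNorm_nonneg A y, energyNorm_nonneg A (R x)]

lemma energyNorm_invOf_adjoint_apply_le [FiniteDimensional 𝕜 E] [FiniteDimensional 𝕜 F]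
    {A : F →ₗ[𝕜] F} (hA : A.IsPositive) [Invertible A] (R : E →ₗ[𝕜] F)
    [hB : Invertible (adjoint R ∘ₗ A ∘ₗ R)] (w : F) :
    energyNorm (adjoint R ∘ₗ A ∘ₗ R) ((⅟(adjoint R ∘ₗ A ∘ₗ R)) (adjoint R w)) ≤
      energyNorm (⅟A) w := by
  rw [energyNorm_adjoint_comp_comp, energyNorm_invOf]
  refine hA.energyNorm_le_of_adjoint_apply_eq R ?_
  rw [← Module.End.mul_apply (f := A), mul_invOf_self, Module.End.one_apply]
  exact congr($(mul_invOf_self (adjoint R ∘ₗ A ∘ₗ R)) (adjoint R w))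

end IsPositive

end LinearMap

-- `rtrOp T R` is `adjoint R ∘ₗ T ∘ₗ R` only after unfolding, so its instance is passed by hand.
lemma rtrNorm_invOf_adjoint_apply_le {T : W →ₗ[ℂ] W} (hT : T.IsPositive) [Invertible T]
    (R : V →ₗ[ℂ] W) [Invertible (rtrOp T R)] (w : W) :
    rtrNorm T R ((⅟(rtrOp T R)) (adjoint R w)) ≤ tinvNorm T w :=
  (hT.energyNorm_invOf_adjoint_apply_le R (hB := ‹Invertible (rtrOp T R)›) w :)

lemma rtrNorm_add_le {T : W →ₗ[ℂ] W} (hT : T.IsPositive) (R : V →ₗ[ℂ] W) (x y : V) :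
    rtrNorm T R (x + y) ≤ rtrNorm T R x + rtrNorm T R y :=
  (hT.adjoint_conj R).energyNorm_add_le x y

/-- Here `qPrev = q̃^{(n−1)}`, `qCur = q̃^{(n)}`, `pCur = p̃^{(n)}`, `pNext = p̃^{(n+1)}`, and
`(⅟(rtrOp T R)) (adjoint R (S q))` is `p̃∞` computed from `q`. -/
theorem pcg_recycle_estimate_general
    (T : W →ₗ[ℂ] W) [Invertible T]
    (hTsa : adjoint T = T)
    (hTpos : ∀ w : W, w ≠ 0 → 0 < (⟪T w, w⟫_ℂ).re)
    (R : V →ₗ[ℂ] W)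
    [Invertible (rtrOp T R)]
    (S : W →ₗ[ℂ] W) (hS : ∀ w : W, tinvNorm T (S w) ≤ tinvNorm T w)
    (ε : ℝ) (hε : 0 ≤ ε)
    (qPrev qCur : W) (pCur pNext : V)
    (hpcg : rtrNorm T R ((⅟(rtrOp T R)) (adjoint R (S qCur)) - pNext) ≤
      ε * rtrNorm T R ((⅟(rtrOp T R)) (adjoint R (S qCur)) - pCur)) :
    rtrNorm T R ((⅟(rtrOp T R)) (adjoint R (S qCur)) - pNext) ≤
      ε * rtrNorm T R ((⅟(rtrOp T R)) (adjoint R (S qPrev)) - pCur) +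
      ε * tinvNorm T (qCur - qPrev) := by
  have hT : T.IsPositive := by
    refine ⟨(isSymmetric_iff_isSelfAdjoint T).2 hTsa, fun w => ?_⟩
    rcases eq_or_ne w 0 with rfl | hw
    · simp
    · exact (hTpos w hw).le
  have hsplit : (⅟(rtrOp T R)) (adjoint R (S qCur)) - pCur =
      ((⅟(rtrOp T R)) (adjoint R (S qPrev)) - pCur) +
        (⅟(rtrOp T R)) (adjoint R (S (qCur - qPrev))) := by
    simp only [map_sub]
    abel
  have hstep : rtrNorm T R ((⅟(rtrOp T R)) (adjoint R (S qCur)) - pCur) ≤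
      rtrNorm T R ((⅟(rtrOp T R)) (adjoint R (S qPrev)) - pCur) + tinvNorm T (qCur - qPrev) := by
    rw [hsplit]
    grw [rtrNorm_add_le hT, rtrNorm_invOf_adjoint_apply_le hT, hS]
  grw [hpcg, hstep, mul_add]

/-- writing `p̃∞^{(n)} := (R*TR)⁻¹R*S q̃^{(n−1)}`, if for a given
`n ≥ 0` the approximate solve satisfies
`‖p̃∞^{(n+1)} − p̃^{(n+1)}‖_{R*TR} ≤ ε‖p̃∞^{(n+1)} − p̃^{(n)}‖_{R*TR}`, then
`‖p̃∞^{(n+1)} − p̃^{(n+1)}‖_{R*TR} ≤ ε‖p̃∞^{(n)} − p̃^{(n)}‖_{R*TR} + ε‖q̃^{(n)} − q̃^{(n−1)}‖_{T⁻¹}`.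
Here `qPrev = q̃^{(n−1)}`, `qCur = q̃^{(n)}`, `pCur = p̃^{(n)}`, `pNext = p̃^{(n+1)}`. -/
theorem pcg_recycle_estimate
    (T : W →ₗ[ℂ] W) [Invertible T]
    (hTsa : adjoint T = T)
    (hTpos : ∀ w : W, w ≠ 0 → 0 < (⟪T w, w⟫_ℂ).re)
    (R : V →ₗ[ℂ] W) (hR : Function.Injective R)
    [Invertible (rtrOp T R)]
    (S : W →ₗ[ℂ] W) (hS : ∀ w : W, tinvNorm T (S w) ≤ tinvNorm T w)
    (ε : ℝ) (hε : 0 ≤ ε)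
    (qPrev qCur : W) (pCur pNext : V)
    (hpcg : rtrNorm T R ((⅟(rtrOp T R)) (adjoint R (S qCur)) - pNext) ≤
      ε * rtrNorm T R ((⅟(rtrOp T R)) (adjoint R (S qCur)) - pCur)) :
    rtrNorm T R ((⅟(rtrOp T R)) (adjoint R (S qCur)) - pNext) ≤
      ε * rtrNorm T R ((⅟(rtrOp T R)) (adjoint R (S qPrev)) - pCur) +
      ε * tinvNorm T (qCur - qPrev) :=
  pcg_recycle_estimate_general T hTsa hTpos R S hS ε hε qPrev qCur pCur pNext hpcg
end
end

section
/- Suppose that for the indices n and n+1 the approximate solve satisfies ‖p̃∞^{(m+1)} − p̃^{(m+1)}‖_{R*TR} ≤ ε‖p̃∞^{(m+1)} − p̃^{(m)}‖_{R*TR} (m = n−1, n), and that q̃^{(m+1)} = ((1−α)Id − αΠS)q̃^{(m)} − 2αTR(p̃^{(m+1)} − p̃∞^{(m+1)}) + αg for m = n−1, n. Then ‖q̃^{(n+1)} − q̃^{(n)}‖_{T⁻¹} ≤ (ρ + 2αε)‖q̃^{(n)} − q̃^{(n−1)}‖_{T⁻¹} + 2α(1+ε)‖p̃∞^{(n)}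 − p̃^{(n)}‖_{R*TR}. -/
noncomputable section
open scoped InnerProductSpace
open LinearMap

variable {V W : Type*}
  [NormedAddCommGroup V] [InnerProductSpace ℂ V] [FiniteDimensional ℂ V]
  [NormedAddCommGroup W] [InnerProductSpace ℂ W] [FiniteDimensional ℂ W]

/-- `ρ := sup_{q ≠ 0} ‖((1−α)Id − αΠS)q‖_{T⁻¹} / ‖q‖_{T⁻¹}`. -/
def rhoSup (T : W →ₗ[ℂ] W) [Invertible T] (R : V →ₗ[ℂ] W) [Invertible (rtrOp T R)]
    (S : W →ₗ[ℂ] W) (α : ℝ) : ℝ :=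
  ⨆ q : {q : W // q ≠ 0},
    tinvNorm T ((1 - α) • (q : W) - α • exchangeOp T R (S (q : W))) / tinvNorm T (q : W)

/-!
`P := TR(R*TR)⁻¹R*` is the `T⁻¹`-orthogonal projection onto the range of `TR`, and
`‖TRx‖_{T⁻¹} = ‖x‖_{R*TR}`; hence `‖(R*TR)⁻¹R*w‖_{R*TR} = ‖Pw‖_{T⁻¹} ≤ ‖w‖_{T⁻¹}`, and the
reflection `Π = 2P − Id` is a `T⁻¹`-isometry, so the ratios defining `ρ` are at most `1`.
Subtracting the two recurrences gives, with `d := q̃^{(n)} − q̃^{(n−1)}`,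
`q̃^{(n+1)} − q̃^{(n)} = ((1−α)Id − αΠS)d + 2αTR(p̃∞^{(n+1)} − p̃^{(n+1)}) − 2αTR(p̃∞^{(n)} − p̃^{(n)})`.
The first term is bounded by `ρ‖d‖`, the last by `2α‖p̃∞^{(n)} − p̃^{(n)}‖`, and the middle one by
`2αε‖p̃∞^{(n+1)} − p̃^{(n)}‖ ≤ 2αε(‖d‖ + ‖p̃∞^{(n)} − p̃^{(n)}‖)`, since
`p̃∞^{(n+1)} − p̃∞^{(n)} = (R*TR)⁻¹R*Sd` and `S` is a contraction.
-/

open RCLike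

theorem Module.End.apply_invOf_apply {R M : Type*} [Semiring R] [AddCommMonoid M] [Module R M]
    (f : Module.End R M) [Invertible f] (x : M) : f (⅟f x) = x := by
  rw [← Module.End.mul_apply, mul_invOf_self, Module.End.one_apply]

theorem Module.End.invOf_apply_apply {R M : Type*} [Semiring R] [AddCommMonoid M] [Module R M]
    (f : Module.End R M) [Invertible f] (x : M) : ⅟f (f x) = x := by
  rw [← Module.End.mul_apply, invOf_mul_self, Module.End.one_apply]

theorem Seminorm.apply_real_smul {𝕜 E : Type*} [RCLike 𝕜] [AddCommGroup E] [Module 𝕜 E]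
    [Module ℝ E] [IsScalarTower ℝ 𝕜 E] (p : Seminorm 𝕜 E) (r : ℝ) (x : E) :
    p (r • x) = |r| * p x := by
  rw [RCLike.real_smul_eq_coe_smul (K := 𝕜), map_smul_eq_mul, RCLike.norm_ofReal]

namespace LinearMap.IsPositive

variable {𝕜 E : Type*} [RCLike 𝕜] [NormedAddCommGroup E] [InnerProductSpace 𝕜 E]
  {A : E →ₗ[𝕜] E}

theorem invOf [Invertible A] (hA : A.IsPositive) : (⅟A).IsPositive := by
  have key (x y : E) : ⟪⅟A x, y⟫_𝕜 = ⟪⅟A x, A (⅟A y)⟫_𝕜 := by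
    rw [Module.End.apply_invOf_apply]
  refine ⟨fun x y => ?_, fun x => ?_⟩
  · rw [key, ← hA.isSymmetric, Module.End.apply_invOf_apply]
  · rw [key, inner_re_symm]
    exact hA.re_inner_nonneg_left _

abbrev preInnerProductCore (hA : A.IsPositive) : PreInnerProductSpace.Core 𝕜 E where
  inner x y := ⟪A x, y⟫_𝕜
  conj_inner_symm x y := by rw [inner_conj_symm, hA.isSymmetric]
  re_inner_nonneg x := hA.re_inner_nonneg_left x
  add_left x y z := by rw [map_add, inner_add_left]
  smul_left x y r := by rw [map_smul, inner_smul_left]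

def seminorm (hA : A.IsPositive) : Seminorm 𝕜 E :=
  letI := hA.preInnerProductCore
  letI : Norm E := InnerProductSpace.Core.toNorm (𝕜 := 𝕜)
  have core : SeminormedSpace.Core 𝕜 E :=
    InnerProductSpace.Core.toSeminormedSpaceCore hA.preInnerProductCore
  Seminorm.of (fun x => √(re ⟪A x, x⟫_𝕜)) core.norm_triangle core.norm_smul

theorem seminorm_apply (hA : A.IsPositive) (x : E) : hA.seminorm x = √(re ⟪A x, x⟫_𝕜) := rfl

theorem seminorm_sq (hA : A.IsPositive) (x : E) : hA.seminorm x ^ 2 = re ⟪A x, x⟫_𝕜 :=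
  Real.sq_sqrt (hA.re_inner_nonneg_left x)

theorem re_inner_le_seminorm_mul_seminorm (hA : A.IsPositive) (x y : E) :
    re ⟪A x, y⟫_𝕜 ≤ hA.seminorm x * hA.seminorm y :=
  letI := hA.preInnerProductCore
  (re_le_norm _).trans (InnerProductSpace.Core.norm_inner_le_norm (𝕜 := 𝕜) x y)

/-- The hypothesis `⟪u, u⟫_A = re ⟪w, u⟫_A` holds when `u` is the `A`-orthogonal projection of `w`
onto a subspace; `2u − w` is then the reflection of `w` through it. -/
theorem seminorm_le_of_re_inner_self_eq (hA : A.IsPositive) {u w : E}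
    (h : re ⟪A u, u⟫_𝕜 = re ⟪A w, u⟫_𝕜) : hA.seminorm u ≤ hA.seminorm w := by
  have hsq : hA.seminorm u ^ 2 ≤ hA.seminorm w * hA.seminorm u := by
    rw [seminorm_sq, h]
    exact hA.re_inner_le_seminorm_mul_seminorm w u
  nlinarith [apply_nonneg hA.seminorm u, apply_nonneg hA.seminorm w]

theorem seminorm_two_smul_sub_of_re_inner_self_eq (hA : A.IsPositive) {u w : E}
    (h : re ⟪A u, u⟫_𝕜 = re ⟪A w, u⟫_𝕜) : hA.seminorm ((2 : 𝕜) • u - w) = hA.seminorm w := by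
  have hsymm : re ⟪A u, w⟫_𝕜 = re ⟪A w, u⟫_𝕜 := by
    rw [hA.isSymmetric, inner_re_symm]
  rw [seminorm_apply, seminorm_apply]
  congr 1
  simp only [map_sub, map_smul, inner_sub_left, inner_sub_right, inner_smul_left,
    inner_smul_right, map_ofNat, mul_re, ofNat_re, ofNat_im, zero_mul, sub_zero]
  linarith

end LinearMap.IsPositive

theorem LinearMap.isPositive_of_adjoint_eq_of_re_inner_pos {𝕜 E : Type*} [RCLike 𝕜]
    [NormedAddCommGroup E] [InnerProductSpace 𝕜 E] [FiniteDimensional 𝕜 E] {A : E →ₗ[𝕜] E}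
    (hsa : adjoint A = A) (hpos : ∀ x : E, x ≠ 0 → 0 < re ⟪A x, x⟫_𝕜) : A.IsPositive := by
  refine ⟨(isSymmetric_iff_isSelfAdjoint A).2 hsa, fun x => ?_⟩
  rcases eq_or_ne x 0 with rfl | hx
  · simp
  · exact (hpos x hx).le

section TInvNorm

variable {E : Type*} [NormedAddCommGroup E] [InnerProductSpace ℂ E] {T : E →ₗ[ℂ] E}
  [Invertible T]

theorem tinvNorm_eq_seminorm (hT : T.IsPositive) : tinvNorm T = hT.invOf.seminorm := rfl

theorem tinvNorm_real_smul (hT : T.IsPositive) (r : ℝ) (p : E) :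
    tinvNorm T (r • p) = |r| * tinvNorm T p := by
  rw [tinvNorm_eq_seminorm hT, Seminorm.apply_real_smul]

end TInvNorm

section Richardson

variable {T : W →ₗ[ℂ] W} (R : V →ₗ[ℂ] W)

theorem rtrNorm_eq_seminorm (hT : T.IsPositive) :
    rtrNorm T R = (hT.adjoint_conj R).seminorm := rfl

theorem exchangeOp_apply [Invertible (rtrOp T R)] (w : W) :
    exchangeOp T R w = (2 : ℂ) • T (R (⅟(rtrOp T R) (adjoint R w))) - w := rfl

variable [Invertible T]

theorem tinvNorm_apply_apply (x : V) : tinvNorm T (T (R x)) = rtrNorm T R x := by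
  rw [tinvNorm, rtrNorm, Module.End.invOf_apply_apply, rtrOp, comp_apply, comp_apply,
    adjoint_inner_left, ← inner_conj_symm, Complex.conj_re]

theorem tinvNorm_add_smul_sub_smul_le (hT : T.IsPositive) (q : W) {r : ℝ} (hr : 0 ≤ r)
    (x y : V) :
    tinvNorm T (q + r • T (R x) - r • T (R y)) ≤
      tinvNorm T q + r * rtrNorm T R x + r * rtrNorm T R y := by
  calc tinvNorm T (q + r • T (R x) - r • T (R y))
      ≤ tinvNorm T q + tinvNorm T (r • T (R x)) + tinvNorm T (r • T (R y)) := by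
        rw [tinvNorm_eq_seminorm hT]
        exact (map_sub_le_add _ _ _).trans (add_le_add_left (map_add_le_add _ _ _) _)
    _ = tinvNorm T q + r * rtrNorm T R x + r * rtrNorm T R y := by
        rw [tinvNorm_real_smul hT, tinvNorm_real_smul hT, tinvNorm_apply_apply,
          tinvNorm_apply_apply, abs_of_nonneg hr]

variable [Invertible (rtrOp T R)]

/-- `P := TR(R*TR)⁻¹R*` satisfies `⟨Pw, Pw⟩_{T⁻¹} = ⟨w, Pw⟩_{T⁻¹}`: both sides equal
`⟪w, R(R*TR)⁻¹R*w⟫`. -/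
theorem inner_invOf_projection_self (hT : T.IsSymmetric) (w : W) :
    ⟪⅟T (T (R (⅟(rtrOp T R) (adjoint R w)))), T (R (⅟(rtrOp T R) (adjoint R w)))⟫_ℂ =
      ⟪⅟T w, T (R (⅟(rtrOp T R) (adjoint R w)))⟫_ℂ := by
  set x := ⅟(rtrOp T R) (adjoint R w)
  have hx : adjoint R (T (R x)) = adjoint R w := Module.End.apply_invOf_apply (rtrOp T R) _
  rw [Module.End.invOf_apply_apply, ← hT (⅟T w), Module.End.apply_invOf_apply,
    ← hT (R x), ← adjoint_inner_left, hx, adjoint_inner_left]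

theorem rtrNorm_invOf_adjoint_le (hT : T.IsPositive) (w : W) :
    rtrNorm T R (⅟(rtrOp T R) (adjoint R w)) ≤ tinvNorm T w := by
  rw [← tinvNorm_apply_apply, tinvNorm_eq_seminorm hT]
  refine hT.invOf.seminorm_le_of_re_inner_self_eq ?_
  rw [inner_invOf_projection_self R hT.isSymmetric]

theorem tinvNorm_exchangeOp (hT : T.IsPositive) (w : W) :
    tinvNorm T (exchangeOp T R w) = tinvNorm T w := by
  rw [exchangeOp_apply, tinvNorm_eq_seminorm hT]
  refine hT.invOf.seminorm_two_smul_sub_of_re_inner_self_eq ?_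
  rw [inner_invOf_projection_self R hT.isSymmetric]

theorem tinvNorm_relaxation_le (hT : T.IsPositive) {S : W →ₗ[ℂ] W}
    (hS : ∀ w : W, tinvNorm T (S w) ≤ tinvNorm T w) {α : ℝ} (hα₀ : 0 ≤ α) (hα₁ : α ≤ 1)
    (q : W) : tinvNorm T ((1 - α) • q - α • exchangeOp T R (S q)) ≤ tinvNorm T q := by
  calc tinvNorm T ((1 - α) • q - α • exchangeOp T R (S q))
      ≤ tinvNorm T ((1 - α) • q) + tinvNorm T (α • exchangeOp T R (S q)) := by
        rw [tinvNorm_eq_seminorm hT]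
        exact map_sub_le_add _ _ _
    _ = (1 - α) * tinvNorm T q + α * tinvNorm T (S q) := by
        rw [tinvNorm_real_smul hT, tinvNorm_real_smul hT, tinvNorm_exchangeOp R hT,
          abs_of_nonneg (sub_nonneg.2 hα₁), abs_of_nonneg hα₀]
    _ ≤ (1 - α) * tinvNorm T q + α * tinvNorm T q := by gcongr; exact hS q
    _ = tinvNorm T q := by ring

theorem tinvNorm_relaxation_le_rhoSup_mul (hT : T.IsPositive) {S : W →ₗ[ℂ] W}
    (hS : ∀ w : W, tinvNorm T (S w) ≤ tinvNorm T w) {α : ℝ} (hα₀ : 0 ≤ α) (hα₁ : α ≤ 1)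
    (d : W) :
    tinvNorm T ((1 - α) • d - α • exchangeOp T R (S d)) ≤ rhoSup T R S α * tinvNorm T d := by
  have hle (q : W) := tinvNorm_relaxation_le R hT hS hα₀ hα₁ q
  have hd_nonneg : 0 ≤ tinvNorm T d := Real.sqrt_nonneg _
  rcases hd_nonneg.eq_or_lt with hd₀ | hd₀
  · simpa [← hd₀] using hle d
  · have hd : d ≠ 0 := by
      rintro rfl
      simp [tinvNorm] at hd₀
    have hbdd : BddAbove (Set.range fun q : {q : W // q ≠ 0} =>
        tinvNorm T ((1 - α) • (q : W) - α • exchangeOp T R (S (q : W))) / tinvNorm T (q : W)) := by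
      refine ⟨1, ?_⟩
      rintro _ ⟨q, rfl⟩
      exact div_le_one_of_le₀ (hle q) (Real.sqrt_nonneg _)
    rw [← div_le_iff₀ hd₀]
    exact le_ciSup hbdd ⟨d, hd⟩

theorem rtrNorm_sub_le_of_solve (hT : T.IsPositive) {S : W →ₗ[ℂ] W}
    (hS : ∀ w : W, tinvNorm T (S w) ≤ tinvNorm T w) (q q' : W) (p : V) :
    rtrNorm T R (⅟(rtrOp T R) (adjoint R (S q')) - p) ≤
      tinvNorm T (q' - q) + rtrNorm T R (⅟(rtrOp T R) (adjoint R (S q)) - p) := by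
  set e := ⅟(rtrOp T R) (adjoint R (S q))
  set e' := ⅟(rtrOp T R) (adjoint R (S q'))
  calc rtrNorm T R (e' - p) ≤ rtrNorm T R (e' - e) + rtrNorm T R (e - p) := by
        rw [← sub_add_sub_cancel e' e p, rtrNorm_eq_seminorm R hT]
        exact map_add_le_add _ _ _
    _ ≤ tinvNorm T (S (q' - q)) + rtrNorm T R (e - p) := by
        gcongr
        simpa only [e, e', ← map_sub] using rtrNorm_invOf_adjoint_le R hT (S (q' - q))
    _ ≤ tinvNorm T (q' - q) + rtrNorm T R (e - p) := by gcongr; exact hS _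

end Richardson

theorem richardson_difference_estimate_general
    (T : W →ₗ[ℂ] W) [Invertible T]
    (hTsa : adjoint T = T)
    (hTpos : ∀ w : W, w ≠ 0 → 0 < (⟪T w, w⟫_ℂ).re)
    (R : V →ₗ[ℂ] W)
    [Invertible (rtrOp T R)]
    (S : W →ₗ[ℂ] W) (hS : ∀ w : W, tinvNorm T (S w) ≤ tinvNorm T w)
    (α : ℝ) (hα : α ∈ Set.Ioo (0 : ℝ) 1) (ε : ℝ) (hε : 0 ≤ ε) (g : W)
    (qNm1 qN qNp1 : W) (pN pNp1 : V)
    (hpcgNp1 : rtrNorm T R ((⅟(rtrOp T R)) (adjoint R (S qN)) - pNp1) ≤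
      ε * rtrNorm T R ((⅟(rtrOp T R)) (adjoint R (S qN)) - pN))
    (hrecN : qN = (1 - α) • qNm1 - α • exchangeOp T R (S qNm1)
      - (2 * α) • (T (R (pN - (⅟(rtrOp T R)) (adjoint R (S qNm1))))) + α • g)
    (hrecNp1 : qNp1 = (1 - α) • qN - α • exchangeOp T R (S qN)
      - (2 * α) • (T (R (pNp1 - (⅟(rtrOp T R)) (adjoint R (S qN))))) + α • g) :
    tinvNorm T (qNp1 - qN) ≤
      (rhoSup T R S α + 2 * α * ε) * tinvNorm T (qN - qNm1) +
      2 * α * (1 + ε) * rtrNorm T R ((⅟(rtrOp T R)) (adjoint R (S qNm1)) - pN) := by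
  have hT : T.IsPositive := isPositive_of_adjoint_eq_of_re_inner_pos hTsa hTpos
  set d := qN - qNm1
  set e₀ := ⅟(rtrOp T R) (adjoint R (S qNm1))
  set e₁ := ⅟(rtrOp T R) (adjoint R (S qN))
  have hdiff : qNp1 - qN = ((1 - α) • d - α • exchangeOp T R (S d))
      + (2 * α) • T (R (e₁ - pNp1)) - (2 * α) • T (R (e₀ - pN)) := by
    linear_combination (norm := skip) hrecNp1 - hrecN
    simp only [d, map_sub]
    module
  rw [hdiff]
  calc _ ≤ tinvNorm T ((1 - α) • d - α • exchangeOp T R (S d))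
        + 2 * α * rtrNorm T R (e₁ - pNp1) + 2 * α * rtrNorm T R (e₀ - pN) :=
        tinvNorm_add_smul_sub_smul_le R hT _ (by linarith [hα.1]) _ _
    _ ≤ rhoSup T R S α * tinvNorm T d + 2 * α * (ε * (tinvNorm T d + rtrNorm T R (e₀ - pN)))
        + 2 * α * rtrNorm T R (e₀ - pN) := by
        have hα₀ := hα.1.le
        gcongr
        · exact tinvNorm_relaxation_le_rhoSup_mul R hT hS hα₀ hα.2.le d
        · exact hpcgNp1.trans (by gcongr; exact rtrNorm_sub_le_of_solve R hT hS qNm1 qN pN)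
    _ = _ := by ring

/-- with `p̃∞^{(n)} := (R*TR)⁻¹R*S q̃^{(n−1)}`, if the approximate solve
satisfies the PCG bound at indices `n` and `n+1` and the approximate Richardson
recurrences hold for `m = n−1, n`, then
`‖q̃^{(n+1)} − q̃^{(n)}‖_{T⁻¹} ≤ (ρ + 2αε)‖q̃^{(n)} − q̃^{(n−1)}‖_{T⁻¹} + 2α(1+ε)‖p̃∞^{(n)} − p̃^{(n)}‖_{R*TR}`.
Here `qNm1 = q̃^{(n−1)}`, `qN = q̃^{(n)}`, `qNp1 = q̃^{(n+1)}`,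
`pNm1 = p̃^{(n−1)}`, `pN = p̃^{(n)}`, `pNp1 = p̃^{(n+1)}`. -/
theorem richardson_difference_estimate
    (T : W →ₗ[ℂ] W) [Invertible T]
    (hTsa : adjoint T = T)
    (hTpos : ∀ w : W, w ≠ 0 → 0 < (⟪T w, w⟫_ℂ).re)
    (R : V →ₗ[ℂ] W) (hR : Function.Injective R)
    [Invertible (rtrOp T R)]
    (S : W →ₗ[ℂ] W) (hS : ∀ w : W, tinvNorm T (S w) ≤ tinvNorm T w)
    (α : ℝ) (hα : α ∈ Set.Ioo (0 : ℝ) 1) (ε : ℝ) (hε : 0 ≤ ε) (g : W)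
    (qNm1 qN qNp1 : W) (pNm1 pN pNp1 : V)
    (hpcgN : rtrNorm T R ((⅟(rtrOp T R)) (adjoint R (S qNm1)) - pN) ≤
      ε * rtrNorm T R ((⅟(rtrOp T R)) (adjoint R (S qNm1)) - pNm1))
    (hpcgNp1 : rtrNorm T R ((⅟(rtrOp T R)) (adjoint R (S qN)) - pNp1) ≤
      ε * rtrNorm T R ((⅟(rtrOp T R)) (adjoint R (S qN)) - pN))
    (hrecN : qN = (1 - α) • qNm1 - α • exchangeOp T R (S qNm1)
      - (2 * α) • (T (R (pN - (⅟(rtrOp T R)) (adjoint R (S qNm1))))) + α • g)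
    (hrecNp1 : qNp1 = (1 - α) • qN - α • exchangeOp T R (S qN)
      - (2 * α) • (T (R (pNp1 - (⅟(rtrOp T R)) (adjoint R (S qN))))) + α • g) :
    tinvNorm T (qNp1 - qN) ≤
      (rhoSup T R S α + 2 * α * ε) * tinvNorm T (qN - qNm1) +
      2 * α * (1 + ε) * rtrNorm T R ((⅟(rtrOp T R)) (adjoint R (S qNm1)) - pN) :=
  richardson_difference_estimate_general T hTsa hTpos R S hS α hα ε hε g qNm1 qN qNp1 pN pNp1
    hpcgNp1 hrecN hrecNp1
end
end
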